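/- Unique information is monotone in its first argument: for finite random variables Y, F, B, B', Uni(Y; B|F) ≤ Uni(Y; (B,B')|F). That is, enlarging the set of spurious features cannot decrease their unique information about Y relative to F. -/

import Mathlib

open scoped BigOperators

section PID

/-- A joint probability distribution on a product of three finite types,
represented as a nonnegative function summing to one. -/
def IsDist3 {Y F B : Type*} [Fintype Y] [Fintype F] [Fintype B]
    (P : Y → F → B → ℝ) : Prop :=
  (∀ y f b, 0 ≤ P y f b) ∧ ∑ y, ∑ f, ∑ b, P y f b = 1

/-- Marginal on (Y, F). -/
def margYF {Y F B : Type*} [Fintype B] (P : Y → F → B → ℝ) (y : Y) (f : F) : ℝ :=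
  ∑ b, P y f b

/-- Marginal on (Y, B). -/
def margYB {Y F B : Type*} [Fintype F] (P : Y → F → B → ℝ) (y : Y) (b : B) : ℝ :=
  ∑ f, P y f b

/-- Marginal on (F, B). -/
def margFB {Y F B : Type*} [Fintype Y] (P : Y → F → B → ℝ) (f : F) (b : B) : ℝ :=
  ∑ y, P y f b

/-- Marginal on Y. -/
def margY {Y F B : Type*} [Fintype F] [Fintype B] (P : Y → F → B → ℝ) (y : Y) : ℝ :=
  ∑ f, ∑ b, P y f b

/-- Marginal on F. -/
def margF {Y F B : Type*} [Fintype Y] [Fintype B] (P : Y → F → B → ℝ) (f : F) : ℝ :=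
  ∑ y, ∑ b, P y f b

/-- Marginal on B. -/
def margB {Y F B : Type*} [Fintype Y] [Fintype F] (P : Y → F → B → ℝ) (b : B) : ℝ :=
  ∑ y, ∑ f, P y f b

/-- Conditional mutual information I_Q(Y ; B | F) for a joint distribution `Q`
on `Y × F × B` (natural log; `0 log 0 = 0` conventions via `Real.log 0 = 0`
and division-by-zero conventions). -/
noncomputable def condMI {Y F B : Type*} [Fintype Y] [Fintype F] [Fintype B]
    (Q : Y → F → B → ℝ) : ℝ :=
  ∑ y, ∑ f, ∑ b, Q y f b *
    Real.log ((Q y f b * margF Q f) / (margYF Q y f * margFB Q f b))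

/-- Mutual information I_P(Y ; B). -/
noncomputable def mutYB {Y F B : Type*} [Fintype Y] [Fintype F] [Fintype B]
    (P : Y → F → B → ℝ) : ℝ :=
  ∑ y, ∑ b, margYB P y b * Real.log (margYB P y b / (margY P y * margB P b))

/-- Mutual information I_P(Y ; F). -/
noncomputable def mutYF {Y F B : Type*} [Fintype Y] [Fintype F] [Fintype B]
    (P : Y → F → B → ℝ) : ℝ :=
  ∑ y, ∑ f, margYF P y f * Real.log (margYF P y f / (margY P y * margF P f))

/-- Mutual information I_P(Y ; (F, B)). -/
noncomputable def mutYFB {Y F B : Type*} [Fintype Y] [Fintype F] [Fintype B]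
    (P : Y → F → B → ℝ) : ℝ :=
  ∑ y, ∑ f, ∑ b, P y f b * Real.log (P y f b / (margY P y * margFB P f b))

/-- The feasible set Δ_P of joint distributions matching the (Y,F) and (Y,B)
marginals of `P`. -/
def Delta {Y F B : Type*} [Fintype Y] [Fintype F] [Fintype B]
    (P : Y → F → B → ℝ) : Set (Y → F → B → ℝ) :=
  {Q | IsDist3 Q ∧ (∀ y f, margYF Q y f = margYF P y f) ∧
      (∀ y b, margYB Q y b = margYB P y b)}

/-- Unique information Uni(Y ; B | F) (Bertschinger et al.):
the infimum of I_Q(Y ; B | F) over Q ∈ Δ_P. -/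
noncomputable def uni {Y F B : Type*} [Fintype Y] [Fintype F] [Fintype B]
    (P : Y → F → B → ℝ) : ℝ :=
  sInf (condMI '' Delta P)

/-- A matrix with entries in [0,1] whose rows each sum to 1. -/
def RowStochastic {F B : Type*} [Fintype B] (T : F → B → ℝ) : Prop :=
  (∀ f b, 0 ≤ T f b ∧ T f b ≤ 1) ∧ ∀ f, ∑ b, T f b = 1

end PID

section Aux

/-- Gibbs / log-sum inequality: if `p` is a probability vector and `r` is a
nonnegative vector with total mass at most one that is positive wherever `p`
is, then the relative entropy-like sum is nonnegative. -/
lemma gibbs_aux {ι : Type*} [Fintype ι] (p r : ι → ℝ) (hp : ∀ i, 0 ≤ p i)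
    (hr : ∀ i, 0 ≤ r i) (hpr : ∀ i, 0 < p i → 0 < r i)
    (hp1 : ∑ i, p i = 1) (hr1 : ∑ i, r i ≤ 1) :
    0 ≤ ∑ i, p i * Real.log (p i / r i) := by
  have key : ∀ i : ι, p i - r i ≤ p i * Real.log (p i / r i) := by
    intro i
    rcases (hp i).eq_or_lt with h | h
    · rw [← h]
      simpa using hr i
    · have hri := hpr i h
      have hx : 0 < r i / p i := div_pos hri h
      have h1 : Real.log (r i / p i) ≤ r i / p i - 1 := Real.log_le_sub_one_of_pos hx
      have h2 : Real.log (p i / r i) = - Real.log (r i / p i) := by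
        rw [← Real.log_inv, inv_div]
      have h3 : 1 - r i / p i ≤ Real.log (p i / r i) := by rw [h2]; linarith
      have h4 : p i * (1 - r i / p i) ≤ p i * Real.log (p i / r i) :=
        mul_le_mul_of_nonneg_left h3 h.le
      have h5 : p i * (1 - r i / p i) = p i - r i := by
        field_simp
      linarith
  have hsum : ∑ i, (p i - r i) ≤ ∑ i, p i * Real.log (p i / r i) :=
    Finset.sum_le_sum (fun i _ => key i)
  rw [Finset.sum_sub_distrib, hp1] at hsum
  linarith

lemma self_div_self_le_one (a : ℝ) : a / a ≤ 1 := by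
  rcases eq_or_ne a 0 with h | h
  · simp [h]
  · rw [div_self h]

lemma condMI_nonneg {Y F B : Type*} [Fintype Y] [Fintype F] [Fintype B]
    (Q : Y → F → B → ℝ) (hQ : IsDist3 Q) : 0 ≤ condMI Q := by
  obtain ⟨hQ0, hQ1⟩ := hQ
  set p : Y × F × B → ℝ := fun x => Q x.1 x.2.1 x.2.2 with hp
  set r : Y × F × B → ℝ := fun x =>
    margYF Q x.1 x.2.1 * margFB Q x.2.1 x.2.2 / margF Q x.2.1 with hrdef
  have hple : ∀ y f b, Q y f b ≤ margYF Q y f := fun y f b =>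
    Finset.single_le_sum (fun b _ => hQ0 y f b) (Finset.mem_univ b)
  have hple2 : ∀ y f b, Q y f b ≤ margFB Q f b := fun y f b =>
    Finset.single_le_sum (fun y _ => hQ0 y f b) (Finset.mem_univ y)
  have hple3 : ∀ y f, margYF Q y f ≤ margF Q f := fun y f =>
    Finset.single_le_sum (f := fun y => ∑ b, Q y f b)
      (fun y _ => Finset.sum_nonneg fun b _ => hQ0 y f b) (Finset.mem_univ y)
  have hg : 0 ≤ ∑ x : Y × F × B, p x * Real.log (p x / r x) := by
    apply gibbs_aux
    · intro x; exact hQ0 _ _ _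
    · intro x
      have h1 : 0 ≤ margYF Q x.1 x.2.1 := Finset.sum_nonneg fun b _ => hQ0 _ _ _
      have h2 : 0 ≤ margFB Q x.2.1 x.2.2 := Finset.sum_nonneg fun y _ => hQ0 _ _ _
      have h3 : 0 ≤ margF Q x.2.1 :=
        Finset.sum_nonneg fun y _ => Finset.sum_nonneg fun b _ => hQ0 _ _ _
      positivity
    · rintro ⟨y, f, b⟩ hx
      have h1 : 0 < margYF Q y f := lt_of_lt_of_le hx (hple y f b)
      have h2 : 0 < margFB Q f b := lt_of_lt_of_le hx (hple2 y f b)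
      have h3 : 0 < margF Q f := lt_of_lt_of_le h1 (hple3 y f)
      exact div_pos (mul_pos h1 h2) h3
    · simp only [Fintype.sum_prod_type] at *
      exact hQ1
    · simp only [Fintype.sum_prod_type]
      have step : ∀ y : Y, ∑ f, ∑ b, r (y, f, b) ≤ ∑ f, margYF Q y f := by
        intro y
        apply Finset.sum_le_sum
        intro f _
        have hcollapse : ∑ b, r (y, f, b) =
            margYF Q y f * (margF Q f / margF Q f) := by
          simp only [hrdef]
          rw [← Finset.sum_div, ← Finset.mul_sum]
          have : ∑ b, margFB Q f b = margF Q f := by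
            unfold margFB margF
            exact Finset.sum_comm
          rw [this, mul_div_assoc]
        rw [hcollapse]
        have h1 : 0 ≤ margYF Q y f := Finset.sum_nonneg fun b _ => hQ0 _ _ _
        calc margYF Q y f * (margF Q f / margF Q f) ≤ margYF Q y f * 1 :=
              mul_le_mul_of_nonneg_left (self_div_self_le_one _) h1
          _ = margYF Q y f := mul_one _
      calc ∑ y, ∑ f, ∑ b, r (y, f, b) ≤ ∑ y, ∑ f, margYF Q y f :=
            Finset.sum_le_sum fun y _ => step y
        _ = 1 := by unfold margYF; exact hQ1
  calc (0:ℝ) ≤ ∑ x : Y × F × B, p x * Real.log (p x / r x) := hg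
    _ = condMI Q := by
        unfold condMI
        simp only [Fintype.sum_prod_type]
        apply Finset.sum_congr rfl; intro y _
        apply Finset.sum_congr rfl; intro f _
        apply Finset.sum_congr rfl; intro b _
        simp only [hp, hrdef]
        rw [div_div_eq_mul_div]

lemma condMI_marg_le {Y F B B' : Type*} [Fintype Y] [Fintype F] [Fintype B] [Fintype B']
    (Q : Y → F → (B × B') → ℝ) (hQ : IsDist3 Q) :
    condMI (fun y f b => ∑ b' : B', Q y f (b, b')) ≤ condMI Q := by
  obtain ⟨hQ0, hQ1⟩ := hQ
  set Qb : Y → F → B → ℝ := fun y f b => ∑ b' : B', Q y f (b, b') with hQbdef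
  have hQb0 : ∀ y f b, 0 ≤ Qb y f b := fun y f b =>
    Finset.sum_nonneg fun _ _ => hQ0 _ _ _
  have hmF : ∀ f, margF Qb f = margF Q f := by
    intro f; unfold margF
    apply Finset.sum_congr rfl; intro y _
    simp only [Fintype.sum_prod_type, hQbdef]
  have hmYF : ∀ y f, margYF Qb y f = margYF Q y f := by
    intro y f; unfold margYF
    simp only [Fintype.sum_prod_type, hQbdef]
  -- basic inequalities
  have hle1 : ∀ y f b b', Q y f (b, b') ≤ Qb y f b := fun y f b b' =>
    Finset.single_le_sum (fun b' _ => hQ0 y f (b, b')) (Finset.mem_univ b')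
  have hle2 : ∀ y f b b', Q y f (b, b') ≤ margFB Q f (b, b') := fun y f b b' =>
    Finset.single_le_sum (fun y _ => hQ0 y f (b, b')) (Finset.mem_univ y)
  have hle3 : ∀ y f b b', Q y f (b, b') ≤ margYF Q y f := fun y f b b' =>
    Finset.single_le_sum (fun x _ => hQ0 y f x) (Finset.mem_univ (b, b'))
  have hle4 : ∀ y f, margYF Q y f ≤ margF Q f := fun y f =>
    Finset.single_le_sum (f := fun y => ∑ x, Q y f x)
      (fun y _ => Finset.sum_nonneg fun x _ => hQ0 y f x) (Finset.mem_univ y)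
  have hle5 : ∀ y f b, Qb y f b ≤ margFB Qb f b := fun y f b =>
    Finset.single_le_sum (fun y _ => hQb0 y f b) (Finset.mem_univ y)
  set p : Y × F × B × B' → ℝ := fun x => Q x.1 x.2.1 (x.2.2.1, x.2.2.2) with hpdef
  set r : Y × F × B × B' → ℝ := fun x =>
    Qb x.1 x.2.1 x.2.2.1 * margFB Q x.2.1 (x.2.2.1, x.2.2.2) / margFB Qb x.2.1 x.2.2.1
    with hrdef
  have hg : 0 ≤ ∑ x : Y × F × B × B', p x * Real.log (p x / r x) := by
    apply gibbs_aux
    · intro x; exact hQ0 _ _ _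
    · intro x
      have h1 : 0 ≤ Qb x.1 x.2.1 x.2.2.1 := hQb0 _ _ _
      have h2 : 0 ≤ margFB Q x.2.1 (x.2.2.1, x.2.2.2) :=
        Finset.sum_nonneg fun y _ => hQ0 _ _ _
      have h3 : 0 ≤ margFB Qb x.2.1 x.2.2.1 :=
        Finset.sum_nonneg fun y _ => hQb0 _ _ _
      positivity
    · rintro ⟨y, f, b, b'⟩ hx
      have h1 : 0 < Qb y f b := lt_of_lt_of_le hx (hle1 y f b b')
      have h2 : 0 < margFB Q f (b, b') := lt_of_lt_of_le hx (hle2 y f b b')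
      have h3 : 0 < margFB Qb f b := lt_of_lt_of_le h1 (hle5 y f b)
      exact div_pos (mul_pos h1 h2) h3
    · simp only [Fintype.sum_prod_type] at hQ1 ⊢
      exact hQ1
    · simp only [Fintype.sum_prod_type]
      have step : ∀ y f b, ∑ b', r (y, f, b, b') =
          Qb y f b * (margFB Qb f b / margFB Qb f b) := by
        intro y f b
        simp only [hrdef]
        rw [← Finset.sum_div, ← Finset.mul_sum]
        have : ∑ b', margFB Q f (b, b') = margFB Qb f b := by
          unfold margFB
          rw [Finset.sum_comm]
        rw [this, mul_div_assoc]
      calc ∑ y, ∑ f, ∑ b, ∑ b', r (y, f, b, b')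
          ≤ ∑ y, ∑ f, ∑ b, Qb y f b := by
            apply Finset.sum_le_sum; intro y _
            apply Finset.sum_le_sum; intro f _
            apply Finset.sum_le_sum; intro b _
            rw [step y f b]
            calc Qb y f b * (margFB Qb f b / margFB Qb f b) ≤ Qb y f b * 1 :=
                  mul_le_mul_of_nonneg_left (self_div_self_le_one _) (hQb0 y f b)
              _ = Qb y f b := mul_one _
        _ = 1 := by
            rw [← hQ1]
            simp only [Fintype.sum_prod_type, hQbdef]
  -- key decomposition
  have key : condMI Qb + ∑ x : Y × F × B × B', p x * Real.log (p x / r x) = condMI Q := by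
    unfold condMI
    simp only [hmF, hmYF]
    simp only [Fintype.sum_prod_type]
    rw [
      ← Finset.sum_add_distrib]
    apply Finset.sum_congr rfl; intro y _
    rw [← Finset.sum_add_distrib]
    apply Finset.sum_congr rfl; intro f _
    rw [← Finset.sum_add_distrib]
    apply Finset.sum_congr rfl; intro b _
    have hQbsum : Qb y f b *
        Real.log (Qb y f b * margF Q f / (margYF Q y f * margFB Qb f b)) =
        ∑ b', Q y f (b, b') *
          Real.log (Qb y f b * margF Q f / (margYF Q y f * margFB Qb f b)) := by
      rw [← Finset.sum_mul]
    rw [hQbsum, ← Finset.sum_add_distrib]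
    apply Finset.sum_congr rfl; intro b' _
    -- pointwise identity
    rcases (hQ0 y f (b, b')).eq_or_lt with h | h
    · simp only [hpdef, ← h, zero_mul, add_zero]
    · have h1 : 0 < Qb y f b := lt_of_lt_of_le h (hle1 y f b b')
      have h2 : 0 < margFB Q f (b, b') := lt_of_lt_of_le h (hle2 y f b b')
      have h3 : 0 < margFB Qb f b := lt_of_lt_of_le h1 (hle5 y f b)
      have h4 : 0 < margYF Q y f := lt_of_lt_of_le h (hle3 y f b b')
      have h5 : 0 < margF Q f := lt_of_lt_of_le h4 (hle4 y f)
      have hlog : Real.log (Qb y f b * margF Q f / (margYF Q y f * margFB Qb f b)) +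
          Real.log (p (y, f, b, b') / r (y, f, b, b')) =
          Real.log (Q y f (b, b') * margF Q f / (margYF Q y f * margFB Q f (b, b'))) := by
        simp only [hpdef, hrdef]
        rw [div_div_eq_mul_div]
        rw [Real.log_div (by positivity) (by positivity),
          Real.log_div (by positivity) (by positivity),
          Real.log_div (by positivity) (by positivity),
          Real.log_mul (by positivity) (by positivity),
          Real.log_mul (by positivity) (by positivity),
          Real.log_mul (by positivity) (by positivity),
          Real.log_mul (by positivity) (by positivity),
          Real.log_mul (by positivity) (by positivity),
          Real.log_mul (by positivity) (by positivity)]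
        ring
      have hpval : p (y, f, b, b') = Q y f (b, b') := rfl
      rw [← hlog, hpval]
      ring
  linarith

end Aux

/-- monotonicity in the first argument:
Uni(Y; B | F) ≤ Uni(Y; (B,B') | F), where the left-hand side is computed for the
marginal distribution of (Y,F,B). -/
theorem stmt6 {Y F B B' : Type*} [Fintype Y] [Fintype F] [Fintype B] [Fintype B']
    (P : Y → F → (B × B') → ℝ) (hP : IsDist3 P) :
    uni (fun y f b => ∑ b' : B', P y f (b, b')) ≤ uni P := by
  set Pb : Y → F → B → ℝ := fun y f b => ∑ b' : B', P y f (b, b') with hPbdef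
  have hne : (condMI '' Delta P).Nonempty :=
    ⟨condMI P, P, ⟨hP, fun _ _ => rfl, fun _ _ => rfl⟩, rfl⟩
  have hbdd : BddBelow (condMI '' Delta Pb) := by
    refine ⟨0, ?_⟩
    rintro x ⟨Q, hQ, rfl⟩
    exact condMI_nonneg Q hQ.1
  apply le_csInf hne
  rintro x ⟨Q, hQ, rfl⟩
  obtain ⟨⟨hQ0, hQ1⟩, hQYF, hQYB⟩ := hQ
  set Qb : Y → F → B → ℝ := fun y f b => ∑ b' : B', Q y f (b, b') with hQbdef
  have hmem : Qb ∈ Delta Pb := by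
    refine ⟨⟨fun y f b => Finset.sum_nonneg fun _ _ => hQ0 _ _ _, ?_⟩, ?_, ?_⟩
    · rw [← hQ1]
      apply Finset.sum_congr rfl; intro y _
      apply Finset.sum_congr rfl; intro f _
      simp only [Fintype.sum_prod_type, hQbdef]
    · intro y f
      have h1 : margYF Qb y f = margYF Q y f := by
        unfold margYF; simp only [Fintype.sum_prod_type, hQbdef]
      have h2 : margYF Pb y f = margYF P y f := by
        unfold margYF; simp only [Fintype.sum_prod_type, hPbdef]
      rw [h1, h2]; exact hQYF y f
    · intro y b
      have h1 : margYB Qb y b = ∑ b', margYB Q y (b, b') := by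
        unfold margYB
        rw [Finset.sum_comm]
      have h2 : margYB Pb y b = ∑ b', margYB P y (b, b') := by
        unfold margYB
        rw [Finset.sum_comm]
      rw [h1, h2]
      exact Finset.sum_congr rfl fun b' _ => hQYB y (b, b')
  calc sInf (condMI '' Delta Pb) ≤ condMI Qb := csInf_le hbdd ⟨Qb, hmem, rfl⟩
    _ ≤ condMI Q := condMI_marg_le Q ⟨hQ0, hQ1⟩
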